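/- Let a_lex(φ, s) be the lexicographic minimum of argmax_{y ∈ K(s)} ⟨φ, y⟩ in ℝ^d. If Σₙ (a_lex(φ, s⁽ⁿ⁾) − a_lex(φ₀, s⁽ⁿ⁾)) = 0, then a_lex(φ, s⁽ⁿ⁾) = a_lex(φ₀, s⁽ⁿ⁾) for all n. -/
import Mathlib


open RealInnerProductSpace

/-- Lexicographic order on `ℝ^d`. -/
def lexLe {d : ℕ} (x y : EuclideanSpace ℝ (Fin d)) : Prop :=
  x = y ∨ ∃ k : Fin d, (∀ i < k, x i = y i) ∧ x k < y k

lemma lexLe_antisymm {d : ℕ} {x y : EuclideanSpace ℝ (Fin d)}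
    (hxy : lexLe x y) (hyx : lexLe y x) : x = y := by
  rcases hxy with h | ⟨k, hk1, hk2⟩
  · exact h
  rcases hyx with h | ⟨k', hk1', hk2'⟩
  · exact h.symm
  rcases lt_trichotomy k k' with h | h | h
  · exact absurd (hk1' k h).symm (ne_of_lt hk2)
  · subst h; exact absurd (hk2.trans hk2') (lt_irrefl _)
  · exact absurd (hk1 k' h) (ne_of_gt hk2')

theorem stmt_10 (d N : ℕ) (K : Fin N → Set (EuclideanSpace ℝ (Fin d)))
    (hKc : ∀ n, IsCompact (K n)) (hKne : ∀ n, (K n).Nonempty)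
    (M : EuclideanSpace ℝ (Fin d) → Fin N → Set (EuclideanSpace ℝ (Fin d)))
    (hM : ∀ φ n, M φ n = {y | y ∈ K n ∧ ∀ z ∈ K n, ⟪φ, z⟫ ≤ ⟪φ, y⟫})
    (alex : EuclideanSpace ℝ (Fin d) → Fin N → EuclideanSpace ℝ (Fin d))
    (halex : ∀ φ n, alex φ n ∈ M φ n ∧ ∀ y ∈ M φ n, lexLe (alex φ n) y)
    (φ φ₀ : EuclideanSpace ℝ (Fin d))
    (hsum : ∑ n, (alex φ n - alex φ₀ n) = 0) :
    ∀ n, alex φ n = alex φ₀ n := by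
  -- membership facts
  have mem : ∀ ψ n, alex ψ n ∈ K n ∧ ∀ z ∈ K n, ⟪ψ, z⟫ ≤ ⟪ψ, alex ψ n⟫ := by
    intro ψ n
    have := (halex ψ n).1
    rwa [hM] at this
  have key : ∀ (ψ₁ ψ₂ : EuclideanSpace ℝ (Fin d)),
      (∑ n, (alex ψ₁ n - alex ψ₂ n) = 0) →
      ∀ n : Fin N, ⟪ψ₂, alex ψ₁ n⟫ = ⟪ψ₂, alex ψ₂ n⟫ := by
    intro ψ₁ ψ₂ hs n
    have hle : ∀ m : Fin N, ⟪ψ₂, alex ψ₁ m⟫ - ⟪ψ₂, alex ψ₂ m⟫ ≤ 0 := by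
      intro m
      have := (mem ψ₂ m).2 (alex ψ₁ m) (mem ψ₁ m).1
      linarith
    have hsum0 : ∑ m, (⟪ψ₂, alex ψ₁ m⟫ - ⟪ψ₂, alex ψ₂ m⟫) = 0 := by
      have : ∑ m, (⟪ψ₂, alex ψ₁ m⟫ - ⟪ψ₂, alex ψ₂ m⟫)
          = ⟪ψ₂, ∑ m, (alex ψ₁ m - alex ψ₂ m)⟫ := by
        rw [inner_sum]
        exact Finset.sum_congr rfl fun m _ => (inner_sub_right _ _ _).symm
      rw [this, hs, inner_zero_right]
    have := (Finset.sum_eq_zero_iff_of_nonpos (fun m _ => hle m)).1 hsum0 n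
      (Finset.mem_univ n)
    linarith [this]
  have hsum' : ∑ n, (alex φ₀ n - alex φ n) = 0 := by
    have : ∑ n, (alex φ₀ n - alex φ n) = -∑ n, (alex φ n - alex φ₀ n) := by
      rw [← Finset.sum_neg_distrib]
      exact Finset.sum_congr rfl fun m _ => (neg_sub _ _).symm
    rw [this, hsum, neg_zero]
  intro n
  -- alex φ n ∈ M φ₀ n
  have h1 : alex φ n ∈ M φ₀ n := by
    rw [hM]
    refine ⟨(mem φ n).1, fun z hz => ?_⟩
    rw [key φ φ₀ hsum n]
    exact (mem φ₀ n).2 z hz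
  have h2 : alex φ₀ n ∈ M φ n := by
    rw [hM]
    refine ⟨(mem φ₀ n).1, fun z hz => ?_⟩
    rw [key φ₀ φ hsum' n]
    exact (mem φ n).2 z hz
  exact lexLe_antisymm ((halex φ n).2 _ h2) ((halex φ₀ n).2 _ h1)
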